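/- arXiv:math/0609495 — 2 statements merged into one kernel-verified Lean document; each statement's English description precedes it below -/
import Mathlib

section
/- Let n ≥ 2 be an integer, r > 0, and f : [0,r] → ℝ a C² function with f(0) = 0, f'(0) = 1, and f(t) > 0 for all t ∈ (0,r]. Let λ ∈ ℝ and let φ : [0,r] → ℝ be a radial first eigenfunction with eigenvalue λ, i.e. φ is C² on [0,r], φ(t) > 0 for t ∈ [0,r), φ(r) = 0, φ'(0) = 0, and φ''(t) + (n−1)(f'(t)/f(t))φ'(t) + λφ(t) = 0 on (0,r). Let u : [0,r] → ℝ be continuous with u ≥ 0 and not identically zero, and suppose C ∈ ℝ satisfies u(t) ≤ C·T(u)(t) for all t ∈ [0,r]. Then λ ≤ C. (Equivalently, λ ≤ sup over t ∈ [0,r) of the quotient h(t,u) = u(t)/T(u)(t).) -/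
/-!
Write `M u σ = ∫₀^σ f^{n-1} u` (`radialMass`), so that `T u t = ∫_t^r M u / f^{n-1}`.
Integration by parts shows that `T` is symmetric for the measure `f^{n-1} dt`:
`∫₀^r f^{n-1} v · T u = ∫₀^r M u · M v / f^{n-1}`. Integrating the ODE in the form
`(f^{n-1} φ')' = -λ f^{n-1} φ` gives `φ = λ T φ`. Pairing `u ≤ C T u` with `f^{n-1} φ` and
moving `T` onto `φ` yields `λ ∫ f^{n-1} u φ ≤ C ∫ f^{n-1} u φ`, and this integral is positive.
-/

open Set intervalIntegral

/-- The operator `T` from Barroso–Bessa: `T u t = ∫_t^r f(σ)^{-(n-1)} ∫_0^σ f(s)^{n-1} u(s) ds dσ`. -/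
noncomputable def BBop (n : ℕ) (r : ℝ) (f u : ℝ → ℝ) (t : ℝ) : ℝ :=
  ∫ σ in t..r, (1 / f σ ^ (n - 1)) * ∫ s in (0:ℝ)..σ, f s ^ (n - 1) * u s

open MeasureTheory Filter Topology

lemma exists_mem_Ioo_pos_of_continuousOn {u : ℝ → ℝ} {a b : ℝ} (hab : a < b)
    (hu : ContinuousOn u (Icc a b)) {t₀ : ℝ} (ht₀ : t₀ ∈ Icc a b) (hpos : 0 < u t₀) :
    ∃ t ∈ Ioo a b, 0 < u t := by
  have : (𝓝[Ioo a b] t₀).NeBot :=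
    mem_closure_iff_nhdsWithin_neBot.1 (by rwa [closure_Ioo hab.ne])
  exact (eventually_mem_nhdsWithin.and
    (((hu t₀ ht₀).mono Ioo_subset_Icc_self).eventually_const_lt hpos)).exists

noncomputable def radialMass (n : ℕ) (f u : ℝ → ℝ) (σ : ℝ) : ℝ :=
  ∫ s in (0:ℝ)..σ, f s ^ (n - 1) * u s

noncomputable def radialFlux (n : ℕ) (f u : ℝ → ℝ) (σ : ℝ) : ℝ :=
  1 / f σ ^ (n - 1) * radialMass n f u σ

lemma BBop_eq_integral_radialFlux (n : ℕ) (r : ℝ) (f u : ℝ → ℝ) (t : ℝ) :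
    BBop n r f u t = ∫ σ in t..r, radialFlux n f u σ :=
  rfl

section RadialOperator

variable {n : ℕ} {r : ℝ} {f u v : ℝ → ℝ}

lemma intervalIntegrable_pow_mul (hf : ContinuousOn f (Icc 0 r)) (hu : ContinuousOn u (Icc 0 r))
    {a b : ℝ} (ha : a ∈ Icc 0 r) (hb : b ∈ Icc 0 r) :
    IntervalIntegrable (fun s => f s ^ (n - 1) * u s) volume a b :=
  (((hf.pow _).mul hu).mono (uIcc_subset_Icc ha hb)).intervalIntegrable

lemma radialMass_nonneg (hf : ∀ s ∈ Icc 0 r, 0 ≤ f s) (hu : ∀ s ∈ Icc 0 r, 0 ≤ u s)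
    {σ : ℝ} (hσ : σ ∈ Icc 0 r) : 0 ≤ radialMass n f u σ :=
  integral_nonneg hσ.1 fun s hs =>
    mul_nonneg (pow_nonneg (hf s ⟨hs.1, hs.2.trans hσ.2⟩) _) (hu s ⟨hs.1, hs.2.trans hσ.2⟩)

lemma radialFlux_nonneg (hf : ∀ s ∈ Icc 0 r, 0 ≤ f s) (hu : ∀ s ∈ Icc 0 r, 0 ≤ u s)
    {σ : ℝ} (hσ : σ ∈ Icc 0 r) : 0 ≤ radialFlux n f u σ :=
  mul_nonneg (one_div_nonneg.2 (pow_nonneg (hf σ hσ) _)) (radialMass_nonneg hf hu hσ)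

lemma BBop_nonneg (hf : ∀ s ∈ Icc 0 r, 0 ≤ f s) (hu : ∀ s ∈ Icc 0 r, 0 ≤ u s)
    {t : ℝ} (ht : t ∈ Icc 0 r) : 0 ≤ BBop n r f u t :=
  integral_nonneg ht.2 fun _ hσ => radialFlux_nonneg hf hu ⟨ht.1.trans hσ.1, hσ.2⟩

lemma continuousOn_radialMass (hf : ContinuousOn f (Icc 0 r)) (hu : ContinuousOn u (Icc 0 r)) :
    ContinuousOn (radialMass n f u) (Icc 0 r) := by
  rcases lt_or_ge r 0 with hr | hr
  · simp [Icc_eq_empty_of_lt hr]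
  rw [← uIcc_of_le hr] at hf hu ⊢
  exact continuousOn_primitive_interval ((hf.pow _).mul hu).integrableOn_uIcc

lemma hasDerivAt_radialMass (hf : ContinuousOn f (Icc 0 r)) (hu : ContinuousOn u (Icc 0 r))
    {t : ℝ} (ht : t ∈ Ioo 0 r) : HasDerivAt (radialMass n f u) (f t ^ (n - 1) * u t) t :=
  have hcont := (hf.pow (n - 1)).mul hu
  integral_hasDerivAt_right
    (intervalIntegrable_pow_mul hf hu ⟨le_rfl, (ht.1.trans ht.2).le⟩ (Ioo_subset_Icc_self ht))
    ((hcont.mono Ioo_subset_Icc_self).stronglyMeasurableAtFilter isOpen_Ioo t ht)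
    (hcont.continuousAt (Icc_mem_nhds ht.1 ht.2))

lemma continuousOn_radialFlux (hf : ContinuousOn f (Icc 0 r)) (hfpos : ∀ s ∈ Ioc 0 r, 0 < f s)
    (hu : ContinuousOn u (Icc 0 r)) : ContinuousOn (radialFlux n f u) (Ioc 0 r) :=
  (continuousOn_const.div ((hf.mono Ioc_subset_Icc_self).pow _)
    fun s hs => (pow_pos (hfpos s hs) _).ne').mul
    ((continuousOn_radialMass hf hu).mono Ioc_subset_Icc_self)

lemma intervalIntegrable_radialFlux_of_le_mul (hf : ContinuousOn f (Icc 0 r))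
    (hf0 : ∀ s ∈ Icc 0 r, 0 ≤ f s) (hfpos : ∀ s ∈ Ioc 0 r, 0 < f s)
    (hu : ContinuousOn u (Icc 0 r)) (hv : ContinuousOn v (Icc 0 r)) (hr : 0 ≤ r) {A : ℝ}
    (hu0 : ∀ s ∈ Icc 0 r, 0 ≤ u s) (huv : ∀ s ∈ Icc 0 r, u s ≤ A * v s)
    (hFv : IntervalIntegrable (radialFlux n f v) volume 0 r) :
    IntervalIntegrable (radialFlux n f u) volume 0 r := by
  have hle : ∀ σ ∈ Ioc 0 r, radialFlux n f u σ ≤ A * radialFlux n f v σ := by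
    intro σ hσ
    have hσ' := Ioc_subset_Icc_self hσ
    have hmass : radialMass n f u σ ≤ A * radialMass n f v σ := by
      rw [radialMass, radialMass, ← intervalIntegral.integral_const_mul]
      refine integral_mono_on hσ.1.le (intervalIntegrable_pow_mul hf hu ⟨le_rfl, hr⟩ hσ')
        ((intervalIntegrable_pow_mul hf hv ⟨le_rfl, hr⟩ hσ').const_mul A) fun s hs => ?_
      have hs' : s ∈ Icc 0 r := ⟨hs.1, hs.2.trans hσ.2⟩
      calc f s ^ (n - 1) * u s ≤ f s ^ (n - 1) * (A * v s) :=
            mul_le_mul_of_nonneg_left (huv s hs') (pow_nonneg (hf0 s hs') _)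
        _ = A * (f s ^ (n - 1) * v s) := by ring
    calc radialFlux n f u σ ≤ 1 / f σ ^ (n - 1) * (A * radialMass n f v σ) :=
          mul_le_mul_of_nonneg_left hmass (one_div_nonneg.2 (pow_nonneg (hf0 σ hσ') _))
      _ = A * radialFlux n f v σ := by rw [radialFlux]; ring
  rw [intervalIntegrable_iff_integrableOn_Ioc_of_le hr] at hFv ⊢
  refine (hFv.const_mul A).mono'
    ((continuousOn_radialFlux hf hfpos hu).aestronglyMeasurable measurableSet_Ioc)
    (ae_restrict_of_forall_mem measurableSet_Ioc fun σ hσ => ?_)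
  rw [Real.norm_eq_abs, abs_of_nonneg (radialFlux_nonneg hf0 hu0 (Ioc_subset_Icc_self hσ))]
  exact hle σ hσ

/-- Near `0`, `u` is dominated by a multiple of `v`; away from `0` the flux is continuous. -/
lemma intervalIntegrable_radialFlux (hf : ContinuousOn f (Icc 0 r))
    (hf0 : ∀ s ∈ Icc 0 r, 0 ≤ f s) (hfpos : ∀ s ∈ Ioc 0 r, 0 < f s)
    (hu : ContinuousOn u (Icc 0 r)) (hu0 : ∀ s ∈ Icc 0 r, 0 ≤ u s)
    (hv : ContinuousOn v (Icc 0 r)) (hvpos : ∀ s ∈ Ico 0 r, 0 < v s) (hr : 0 < r)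
    (hFv : IntervalIntegrable (radialFlux n f v) volume 0 r) :
    IntervalIntegrable (radialFlux n f u) volume 0 r := by
  have hsub : Icc 0 (r / 2) ⊆ Icc 0 r := Icc_subset_Icc_right (by linarith)
  obtain ⟨x₀, hx₀, hmin⟩ := isCompact_Icc.exists_isMinOn (nonempty_Icc.2 (by linarith))
    (hv.mono hsub)
  obtain ⟨M, hM⟩ := isCompact_Icc.exists_bound_of_continuousOn hu
  have hvx₀ : 0 < v x₀ := hvpos x₀ ⟨hx₀.1, hx₀.2.trans_lt (by linarith)⟩
  have hA : 0 ≤ M / v x₀ := div_nonneg ((norm_nonneg _).trans (hM 0 ⟨le_rfl, hr.le⟩)) hvx₀.le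
  have hnear : IntervalIntegrable (radialFlux n f u) volume 0 (r / 2) := by
    refine intervalIntegrable_radialFlux_of_le_mul (A := M / v x₀) (hf.mono hsub)
      (fun s hs => hf0 s (hsub hs)) (fun s hs => hfpos s ⟨hs.1, hs.2.trans (by linarith)⟩)
      (hu.mono hsub) (hv.mono hsub)
      (by positivity) (fun s hs => hu0 s (hsub hs)) (fun s hs => ?_)
      (hFv.mono_set (by rw [uIcc_of_le hr.le, uIcc_of_le (by positivity)]; exact hsub))
    calc u s ≤ M := (le_abs_self _).trans (hM s (hsub hs))
      _ = M / v x₀ * v x₀ := by field_simp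
      _ ≤ M / v x₀ * v s := mul_le_mul_of_nonneg_left (hmin hs) hA
  have hfar : IntervalIntegrable (radialFlux n f u) volume (r / 2) r := by
    refine ((continuousOn_radialFlux hf hfpos hu).mono ?_).intervalIntegrable
    rw [uIcc_of_le (by linarith)]
    exact Icc_subset_Ioc_iff (by linarith) |>.2 ⟨by linarith, le_rfl⟩
  exact hnear.trans hfar

lemma continuousOn_BBop (hr : 0 ≤ r) (hFu : IntervalIntegrable (radialFlux n f u) volume 0 r) :
    ContinuousOn (BBop n r f u) (Icc 0 r) := by
  rw [← uIcc_of_le hr]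
  exact continuousOn_primitive_interval_left ((intervalIntegrable_iff').1 hFu)

lemma hasDerivAt_BBop (hf : ContinuousOn f (Icc 0 r)) (hfpos : ∀ s ∈ Ioc 0 r, 0 < f s)
    (hu : ContinuousOn u (Icc 0 r)) (hFu : IntervalIntegrable (radialFlux n f u) volume 0 r)
    {t : ℝ} (ht : t ∈ Ioo 0 r) : HasDerivAt (BBop n r f u) (-radialFlux n f u t) t :=
  have hcont := continuousOn_radialFlux (n := n) hf hfpos hu
  integral_hasDerivAt_left
    (hFu.mono_set (by rw [uIcc_of_le ht.2.le, uIcc_of_le (ht.1.trans ht.2).le]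
                      exact Icc_subset_Icc_left ht.1.le))
    ((hcont.mono Ioo_subset_Ioc_self).stronglyMeasurableAtFilter isOpen_Ioo t ht)
    (hcont.continuousAt (Ioc_mem_nhds ht.1 ht.2))

lemma integral_pow_mul_mul_BBop (hf : ContinuousOn f (Icc 0 r))
    (hfpos : ∀ s ∈ Ioc 0 r, 0 < f s) (hu : ContinuousOn u (Icc 0 r))
    (hv : ContinuousOn v (Icc 0 r)) (hr : 0 ≤ r)
    (hFu : IntervalIntegrable (radialFlux n f u) volume 0 r) :
    ∫ t in 0..r, f t ^ (n - 1) * v t * BBop n r f u t =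
      ∫ σ in 0..r, radialFlux n f u σ * radialMass n f v σ := by
  have hIoo : Ioo (min 0 r) (max 0 r) = Ioo 0 r := by rw [min_eq_left hr, max_eq_right hr]
  have hparts := integral_mul_deriv_eq_deriv_mul_of_hasDerivAt
    (uIcc_of_le hr ▸ continuousOn_BBop hr hFu)
    (uIcc_of_le hr ▸ continuousOn_radialMass (n := n) hf hv)
    (fun t ht => hasDerivAt_BBop hf hfpos hu hFu (hIoo ▸ ht))
    (fun t ht => hasDerivAt_radialMass hf hv (hIoo ▸ ht))
    hFu.neg (intervalIntegrable_pow_mul hf hv ⟨le_rfl, hr⟩ ⟨hr, le_rfl⟩)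
  have hBr : BBop n r f u r = 0 := integral_same
  have hM0 : radialMass n f v 0 = 0 := integral_same
  simp only [hBr, hM0, zero_mul, mul_zero, sub_zero, zero_sub, neg_mul,
    intervalIntegral.integral_neg, neg_neg] at hparts
  rw [← hparts]
  exact integral_congr fun t _ => by ring

/-- Both sides equal `∫ radialMass u * radialMass v / f ^ (n - 1)`. -/
lemma integral_pow_mul_mul_BBop_comm (hf : ContinuousOn f (Icc 0 r))
    (hfpos : ∀ s ∈ Ioc 0 r, 0 < f s) (hu : ContinuousOn u (Icc 0 r))
    (hv : ContinuousOn v (Icc 0 r)) (hr : 0 ≤ r)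
    (hFu : IntervalIntegrable (radialFlux n f u) volume 0 r)
    (hFv : IntervalIntegrable (radialFlux n f v) volume 0 r) :
    ∫ t in 0..r, f t ^ (n - 1) * v t * BBop n r f u t =
      ∫ t in 0..r, f t ^ (n - 1) * u t * BBop n r f v t := by
  rw [integral_pow_mul_mul_BBop hf hfpos hu hv hr hFu,
    integral_pow_mul_mul_BBop hf hfpos hv hu hr hFv]
  exact integral_congr fun σ _ => by simp only [radialFlux]; ring

lemma integral_pow_mul_mul_pos (hr : 0 < r) (hf : ContinuousOn f (Icc 0 r))
    (hf0 : ∀ s ∈ Icc 0 r, 0 ≤ f s) (hfpos : ∀ s ∈ Ioc 0 r, 0 < f s)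
    (hu : ContinuousOn u (Icc 0 r)) (hu0 : ∀ s ∈ Icc 0 r, 0 ≤ u s)
    (hune : ∃ s ∈ Icc 0 r, u s ≠ 0) (hv : ContinuousOn v (Icc 0 r))
    (hv0 : ∀ s ∈ Icc 0 r, 0 ≤ v s) (hvpos : ∀ s ∈ Ioo 0 r, 0 < v s) :
    0 < ∫ t in 0..r, f t ^ (n - 1) * u t * v t := by
  obtain ⟨t₀, ht₀, hut₀⟩ := hune
  obtain ⟨t₁, ht₁, hut₁⟩ :=
    exists_mem_Ioo_pos_of_continuousOn hr hu ht₀ ((hu0 t₀ ht₀).lt_of_ne' hut₀)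
  refine integral_pos hr (((hf.pow _).mul hu).mul hv) (fun t ht => ?_)
    ⟨t₁, Ioo_subset_Icc_self ht₁, by
      have := hfpos t₁ ⟨ht₁.1, ht₁.2.le⟩; have := hvpos t₁ ht₁; positivity⟩
  have ht' := Ioc_subset_Icc_self ht
  have := hf0 t ht'; have := hu0 t ht'; have := hv0 t ht'
  positivity

lemma le_of_eq_mul_BBop_of_le_mul_BBop (hf : ContinuousOn f (Icc 0 r))
    (hf0 : ∀ s ∈ Icc 0 r, 0 ≤ f s) (hfpos : ∀ s ∈ Ioc 0 r, 0 < f s) (hr : 0 ≤ r)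
    (hu : ContinuousOn u (Icc 0 r)) (hu0 : ∀ s ∈ Icc 0 r, 0 ≤ u s)
    (hFu : IntervalIntegrable (radialFlux n f u) volume 0 r)
    (hv : ContinuousOn v (Icc 0 r)) (hv0 : ∀ s ∈ Icc 0 r, 0 ≤ v s)
    (hFv : IntervalIntegrable (radialFlux n f v) volume 0 r) {lam C : ℝ}
    (hvT : ∀ t ∈ Icc 0 r, v t = lam * BBop n r f v t)
    (huT : ∀ t ∈ Icc 0 r, u t ≤ C * BBop n r f u t)
    (hpos : 0 < ∫ t in 0..r, f t ^ (n - 1) * u t * v t) : lam ≤ C := by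
  set J := ∫ t in 0..r, f t ^ (n - 1) * u t * BBop n r f v t
  have hIJ : ∫ t in 0..r, f t ^ (n - 1) * u t * v t = lam * J := by
    rw [← intervalIntegral.integral_const_mul]
    refine integral_congr fun t ht => ?_
    rw [uIcc_of_le hr] at ht
    simp only [hvT t ht]
    ring
  have hIC : ∫ t in 0..r, f t ^ (n - 1) * u t * v t ≤ C * J := by
    have hJ : J = ∫ t in 0..r, f t ^ (n - 1) * v t * BBop n r f u t :=
      integral_pow_mul_mul_BBop_comm hf hfpos hv hu hr hFv hFu
    rw [hJ, ← intervalIntegral.integral_const_mul]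
    refine integral_mono_on hr ((((hf.pow _).mul hu).mul hv).intervalIntegrable_of_Icc hr)
      ((continuousOn_const.mul (((hf.pow _).mul hv).mul (continuousOn_BBop hr hFu))
        ).intervalIntegrable_of_Icc hr) fun t ht => ?_
    calc f t ^ (n - 1) * u t * v t = f t ^ (n - 1) * v t * u t := by ring
      _ ≤ f t ^ (n - 1) * v t * (C * BBop n r f u t) :=
        mul_le_mul_of_nonneg_left (huT t ht) (mul_nonneg (pow_nonneg (hf0 t ht) _) (hv0 t ht))
      _ = C * (f t ^ (n - 1) * v t * BBop n r f u t) := by ring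
  have hJ0 : 0 ≤ J := integral_nonneg hr fun t ht =>
    mul_nonneg (mul_nonneg (pow_nonneg (hf0 t ht) _) (hu0 t ht)) (BBop_nonneg hf0 hv0 ht)
  have hJ : 0 < J := hJ0.lt_of_ne fun h => hpos.ne' (by rw [hIJ, ← h, mul_zero])
  exact le_of_mul_le_mul_right (hIJ ▸ hIC) hJ

end RadialOperator

section Eigenfunction

variable {n : ℕ} {r lam : ℝ} {f φ : ℝ → ℝ}

lemma hasDerivAt_pow_mul_deriv (hn : 1 ≤ n) {t : ℝ} (hf : DifferentiableAt ℝ f t)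
    (hφ : DifferentiableAt ℝ (deriv φ) t) (hft : f t ≠ 0)
    (hode : deriv (deriv φ) t + ((n : ℝ) - 1) * (deriv f t / f t) * deriv φ t + lam * φ t = 0) :
    HasDerivAt (fun x => f x ^ (n - 1) * deriv φ x) (-(lam * (f t ^ (n - 1) * φ t))) t := by
  refine ((hf.hasDerivAt.pow (n - 1)).mul hφ.hasDerivAt).congr_deriv ?_
  obtain ⟨m, rfl⟩ : ∃ m, n = m + 1 := ⟨n - 1, by omega⟩
  simp only [Pi.pow_apply, Nat.add_sub_cancel, Nat.cast_add, Nat.cast_one, add_sub_cancel_right]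
    at hode ⊢
  rcases m with _ | m
  · simp only [CharP.cast_eq_zero, zero_mul, add_zero, pow_zero, one_mul] at hode ⊢
    linarith
  · rw [Nat.add_sub_cancel, pow_succ]
    field_simp at hode
    linear_combination f t ^ m * hode

lemma derivWithin_eq_neg_mul_radialFlux (hn : 2 ≤ n) (hf : DifferentiableOn ℝ f (Icc 0 r))
    (hf0 : f 0 = 0) (hfpos : ∀ t ∈ Ioc 0 r, 0 < f t) (hφ : ContDiffOn ℝ 2 φ (Icc 0 r))
    (hode : ∀ t ∈ Ioo 0 r,
      deriv (deriv φ) t + ((n : ℝ) - 1) * (deriv f t / f t) * deriv φ t + lam * φ t = 0)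
    {σ : ℝ} (hσ : σ ∈ Ioc 0 r) :
    derivWithin φ (Icc 0 r) σ = -(lam * radialFlux n f φ σ) := by
  have hr : 0 < r := hσ.1.trans_le hσ.2
  set g : ℝ → ℝ := fun x => f x ^ (n - 1) * derivWithin φ (Icc 0 r) x with hg
  have hderiv : ∀ x ∈ Ioo 0 r, HasDerivAt g (-(lam * (f x ^ (n - 1) * φ x))) x := by
    intro x hx
    have hφ' : DifferentiableAt ℝ (deriv φ) x :=
      (((hφ.mono Ioo_subset_Icc_self).deriv_of_isOpen isOpen_Ioo (m := 1) le_rfl).differentiableOn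
        one_ne_zero).differentiableAt (Ioo_mem_nhds hx.1 hx.2)
    refine (hasDerivAt_pow_mul_deriv (by omega)
      ((hf x (Ioo_subset_Icc_self hx)).differentiableAt (Icc_mem_nhds hx.1 hx.2)) hφ'
      (hfpos x ⟨hx.1, hx.2.le⟩).ne' (hode x hx)).congr_of_eventuallyEq ?_
    filter_upwards [Ioo_mem_nhds hx.1 hx.2] with y hy
    simp only [hg, derivWithin_of_mem_nhds (Icc_mem_nhds hy.1 hy.2)]
  have hcont : ContinuousOn g (Icc 0 σ) :=
    ((hf.continuousOn.pow _).mul (hφ.continuousOn_derivWithin (uniqueDiffOn_Icc hr)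
      one_le_two)).mono (Icc_subset_Icc_right hσ.2)
  have hint : IntervalIntegrable (fun x => -(lam * (f x ^ (n - 1) * φ x))) volume 0 σ :=
    ((intervalIntegrable_pow_mul hf.continuousOn hφ.continuousOn ⟨le_rfl, hr.le⟩
      (Ioc_subset_Icc_self hσ)).const_mul lam).neg
  have hftc := integral_eq_sub_of_hasDerivAt_of_le hσ.1.le hcont
    (fun x hx => hderiv x ⟨hx.1, hx.2.trans_le hσ.2⟩) hint
  have hg0 : g 0 = 0 := by simp [hg, hf0, zero_pow (by omega : n - 1 ≠ 0)]
  rw [hg0, sub_zero, intervalIntegral.integral_neg, intervalIntegral.integral_const_mul, hg]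
    at hftc
  have hfσ : f σ ^ (n - 1) ≠ 0 := (pow_pos (hfpos σ hσ) _).ne'
  rw [radialFlux, radialMass]
  field_simp
  linear_combination -hftc

lemma eq_mul_BBop (hn : 2 ≤ n) (hr : 0 < r) (hf : DifferentiableOn ℝ f (Icc 0 r))
    (hf0 : f 0 = 0) (hfpos : ∀ t ∈ Ioc 0 r, 0 < f t) (hφ : ContDiffOn ℝ 2 φ (Icc 0 r))
    (hφr : φ r = 0)
    (hode : ∀ t ∈ Ioo 0 r,
      deriv (deriv φ) t + ((n : ℝ) - 1) * (deriv f t / f t) * deriv φ t + lam * φ t = 0)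
    {t : ℝ} (ht : t ∈ Icc 0 r) : φ t = lam * BBop n r f φ t := by
  have hφd := hφ.differentiableOn two_ne_zero
  have hftc : ∫ σ in t..r, derivWithin φ (Icc 0 r) σ = φ r - φ t :=
    integral_eq_sub_of_hasDerivAt_of_le ht.2 (hφ.continuousOn.mono (Icc_subset_Icc_left ht.1))
      (fun x hx => (hφd x ⟨ht.1.trans hx.1.le, hx.2.le⟩).hasDerivWithinAt.hasDerivAt
        (Icc_mem_nhds (ht.1.trans_lt hx.1) hx.2))
      (((hφ.continuousOn_derivWithin (uniqueDiffOn_Icc hr) one_le_two).mono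
        (Icc_subset_Icc_left ht.1)).intervalIntegrable_of_Icc ht.2)
  have hcongr : ∫ σ in t..r, derivWithin φ (Icc 0 r) σ =
      ∫ σ in t..r, -(lam * radialFlux n f φ σ) := by
    refine integral_congr_ae (ae_of_all _ fun σ hσ => ?_)
    rw [uIoc_of_le ht.2] at hσ
    exact derivWithin_eq_neg_mul_radialFlux hn hf hf0 hfpos hφ hode ⟨ht.1.trans_lt hσ.1, hσ.2⟩
  rw [hcongr, intervalIntegral.integral_neg, intervalIntegral.integral_const_mul, hφr] at hftc
  rw [BBop_eq_integral_radialFlux]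
  linarith

lemma intervalIntegrable_radialFlux_of_ne_zero (hlam : lam ≠ 0) (hn : 2 ≤ n) (hr : 0 < r)
    (hf : DifferentiableOn ℝ f (Icc 0 r)) (hf0 : f 0 = 0) (hfpos : ∀ t ∈ Ioc 0 r, 0 < f t)
    (hφ : ContDiffOn ℝ 2 φ (Icc 0 r))
    (hode : ∀ t ∈ Ioo 0 r,
      deriv (deriv φ) t + ((n : ℝ) - 1) * (deriv f t / f t) * deriv φ t + lam * φ t = 0) :
    IntervalIntegrable (radialFlux n f φ) volume 0 r := by
  refine (((hφ.continuousOn_derivWithin (uniqueDiffOn_Icc hr) one_le_two).neg.div_const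
    lam).intervalIntegrable_of_Icc hr.le).congr fun σ hσ => ?_
  rw [uIoc_of_le hr.le] at hσ
  rw [Pi.neg_apply, derivWithin_eq_neg_mul_radialFlux hn hf hf0 hfpos hφ hode hσ]
  field_simp

end Eigenfunction

theorem stmt5_general (n : ℕ) (hn : 2 ≤ n) (r : ℝ) (hr : 0 < r)
    (f : ℝ → ℝ) (hf : ContDiffOn ℝ 2 f (Set.Icc 0 r))
    (hf0 : f 0 = 0)
    (hfpos : ∀ t ∈ Set.Ioc (0:ℝ) r, 0 < f t)
    (lam : ℝ) (φ : ℝ → ℝ) (hφ : ContDiffOn ℝ 2 φ (Set.Icc 0 r))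
    (hφpos : ∀ t ∈ Set.Ico (0:ℝ) r, 0 < φ t) (hφr : φ r = 0)
    (hφode : ∀ t ∈ Set.Ioo (0:ℝ) r,
      deriv (deriv φ) t + ((n : ℝ) - 1) * (deriv f t / f t) * deriv φ t + lam * φ t = 0)
    (u : ℝ → ℝ) (hu : ContinuousOn u (Set.Icc 0 r))
    (hunonneg : ∀ t ∈ Set.Icc (0:ℝ) r, 0 ≤ u t)
    (hune : ∃ t ∈ Set.Icc (0:ℝ) r, u t ≠ 0)
    (C : ℝ) (hC : ∀ t ∈ Set.Icc (0:ℝ) r, u t ≤ C * BBop n r f u t) :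
    lam ≤ C := by
  have hfd := hf.differentiableOn two_ne_zero
  have hfnn : ∀ t ∈ Icc 0 r, 0 ≤ f t := by
    rintro t ⟨ht0, htr⟩
    rcases ht0.eq_or_lt with rfl | ht0
    exacts [hf0.ge, (hfpos t ⟨ht0, htr⟩).le]
  have hφnn : ∀ t ∈ Icc 0 r, 0 ≤ φ t := by
    rintro t ⟨ht0, htr⟩
    rcases htr.lt_or_eq with htr | rfl
    exacts [(hφpos t ⟨ht0, htr⟩).le, hφr.ge]
  have hφT : ∀ t ∈ Icc 0 r, φ t = lam * BBop n r f φ t := fun t ht =>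
    eq_mul_BBop hn hr hfd hf0 hfpos hφ hφr hφode ht
  have hlam : lam ≠ 0 := by
    rintro rfl
    exact (hφpos 0 ⟨le_rfl, hr⟩).ne' (by simpa using hφT 0 ⟨le_rfl, hr.le⟩)
  have hFφ := intervalIntegrable_radialFlux_of_ne_zero hlam hn hr hfd hf0 hfpos hφ hφode
  exact le_of_eq_mul_BBop_of_le_mul_BBop hfd.continuousOn hfnn hfpos hr.le hu hunonneg
    (intervalIntegrable_radialFlux hfd.continuousOn hfnn hfpos hu hunonneg hφ.continuousOn hφpos
      hr hFφ)
    hφ.continuousOn hφnn hFφ hφT hC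
    (integral_pow_mul_mul_pos hr hfd.continuousOn hfnn hfpos hu hunonneg hune hφ.continuousOn hφnn
      fun t ht => hφpos t ⟨ht.1.le, ht.2⟩)

/-- Upper-bound half of Theorem 1: if `φ` is a positive radial first eigenfunction with
eigenvalue `λ`, and `u ≥ 0` not identically zero satisfies `u ≤ C · T(u)` on `[0,r]`,
then `λ ≤ C`. -/
theorem stmt5 (n : ℕ) (hn : 2 ≤ n) (r : ℝ) (hr : 0 < r)
    (f : ℝ → ℝ) (hf : ContDiffOn ℝ 2 f (Set.Icc 0 r))
    (hf0 : f 0 = 0) (hf'0 : derivWithin f (Set.Icc 0 r) 0 = 1)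
    (hfpos : ∀ t ∈ Set.Ioc (0:ℝ) r, 0 < f t)
    (lam : ℝ) (φ : ℝ → ℝ) (hφ : ContDiffOn ℝ 2 φ (Set.Icc 0 r))
    (hφpos : ∀ t ∈ Set.Ico (0:ℝ) r, 0 < φ t) (hφr : φ r = 0)
    (hφ'0 : derivWithin φ (Set.Icc 0 r) 0 = 0)
    (hφode : ∀ t ∈ Set.Ioo (0:ℝ) r,
      deriv (deriv φ) t + ((n : ℝ) - 1) * (deriv f t / f t) * deriv φ t + lam * φ t = 0)
    (u : ℝ → ℝ) (hu : ContinuousOn u (Set.Icc 0 r))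
    (hunonneg : ∀ t ∈ Set.Icc (0:ℝ) r, 0 ≤ u t)
    (hune : ∃ t ∈ Set.Icc (0:ℝ) r, u t ≠ 0)
    (C : ℝ) (hC : ∀ t ∈ Set.Icc (0:ℝ) r, u t ≤ C * BBop n r f u t) :
    lam ≤ C :=
  stmt5_general n hn r hr f hf hf0 hfpos lam φ hφ hφpos hφr hφode u hu hunonneg hune C hC
end

section
/- Let n ≥ 2 be an integer, r > 0, and f : [0,r] → ℝ a C² function with f(0) = 0, f'(0) = 1, and f(t) > 0 for all t ∈ (0,r]. Let λ ∈ ℝ and let φ : [0,r] → ℝ be a radial first eigenfunction with eigenvalue λ, i.e. φ is C² on [0,r], φ(t) > 0 for t ∈ [0,r), φ(r) = 0, φ'(0) = 0, and φ''(t) + (n−1)(f'(t)/f(t))φ'(t) + λφ(t) = 0 on (0,r). Then λ ≥ 1 / ( ∫₀ʳ (1/f(σ)^{n−1}) · (∫₀^σ f(s)^{n−1} ds) dσ ). -/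
open Set intervalIntegral

/-!
With `g = f ^ (n - 1)` the equation reads `(g φ')' = -λ g φ`. Integrating from `0`, where `g`
vanishes, gives `g φ' = -λ ∫₀ᵗ g φ`. As `φ > 0 = φ r`, this forces `λ > 0` and `φ` decreasing,
so `∫₀ᵗ g φ ≤ φ 0 ∫₀ᵗ g`; integrating `-φ'` over `[0, r]` then yields
`φ 0 ≤ λ φ 0 ∫₀ʳ (1 / g σ) ∫₀^σ g`.
-/

theorem hasDerivAt_pow_mul_deriv_of_ode {f φ : ℝ → ℝ} {k : ℕ} {lam t : ℝ}
    (hf : DifferentiableAt ℝ f t) (hφ' : DifferentiableAt ℝ (deriv φ) t) (hft : f t ≠ 0)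
    (hode : deriv (deriv φ) t + k * (deriv f t / f t) * deriv φ t + lam * φ t = 0) :
    HasDerivAt (fun s => f s ^ k * deriv φ s) (-(lam * (f t ^ k * φ t))) t := by
  refine ((hf.hasDerivAt.pow k).mul hφ'.hasDerivAt).congr_deriv ?_
  have hpow : (k : ℝ) * f t ^ (k - 1) = f t ^ k * (k / f t) := by
    rcases k with _ | k
    · simp
    · rw [pow_succ]
      field_simp
      simp
  rw [Pi.pow_apply, hpow]
  linear_combination f t ^ k * hode

theorem mul_deriv_eq_neg_integral {g φ : ℝ → ℝ} {a b lam t : ℝ}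
    (hg : ContinuousOn g (Icc a b)) (hga : g a = 0) (hφ : ContDiffOn ℝ 1 φ (Icc a b))
    (hderiv : ∀ s ∈ Ioo a b, HasDerivAt (fun s => g s * deriv φ s) (-(lam * (g s * φ s))) s)
    (ht : t ∈ Ioo a b) :
    g t * deriv φ t = -(lam * ∫ s in a..t, g s * φ s) := by
  set H := fun s => g s * derivWithin φ (Icc a b) s
  have hsub : Icc a t ⊆ Icc a b := Icc_subset_Icc_right ht.2.le
  have hHc : ContinuousOn H (Icc a t) :=
    (hg.mul (hφ.continuousOn_derivWithin (uniqueDiffOn_Icc (ht.1.trans ht.2)) le_rfl)).mono hsub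
  have hHd : ∀ s ∈ Ioo a t, HasDerivAt H (-(lam * (g s * φ s))) s := by
    intro s hs
    have hs' : s ∈ Ioo a b := ⟨hs.1, hs.2.trans ht.2⟩
    refine (hderiv s hs').congr_of_eventuallyEq ?_
    filter_upwards [Ioo_mem_nhds hs'.1 hs'.2] with u hu
    simp only [H, derivWithin_of_mem_nhds (Icc_mem_nhds hu.1 hu.2)]
  have hint : IntervalIntegrable (fun s => -(lam * (g s * φ s))) MeasureTheory.volume a t :=
    (((hg.mul hφ.continuousOn).mono hsub).intervalIntegrable_of_Icc ht.1.le).const_mul _ |>.neg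
  have hFTC := integral_eq_sub_of_hasDerivAt_of_le ht.1.le hHc hHd hint
  rw [integral_neg, integral_const_mul] at hFTC
  simp only [H, hga, zero_mul, sub_zero, derivWithin_of_mem_nhds (Icc_mem_nhds ht.1 ht.2)] at hFTC
  exact hFTC.symm

theorem pos_and_antitoneOn_of_mul_deriv_eq_neg {g F φ : ℝ → ℝ} {a b lam : ℝ} (hab : a ≤ b)
    (hφc : ContinuousOn φ (Icc a b)) (hφd : DifferentiableOn ℝ φ (Ioo a b)) (hφab : φ b < φ a)
    (hg : ∀ t ∈ Ioo a b, 0 < g t) (hF : ∀ t ∈ Ioo a b, 0 ≤ F t)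
    (hflux : ∀ t ∈ Ioo a b, g t * deriv φ t = -(lam * F t)) :
    0 < lam ∧ AntitoneOn φ (Icc a b) := by
  rw [← interior_Icc] at hφd
  have hlam : 0 < lam := by
    by_contra! hlam
    refine hφab.not_ge (monotoneOn_of_deriv_nonneg (convex_Icc a b) hφc hφd (fun t ht => ?_)
      (left_mem_Icc.2 hab) (right_mem_Icc.2 hab) hab)
    rw [interior_Icc] at ht
    nlinarith [hflux t ht, hg t ht, mul_nonneg (neg_nonneg.2 hlam) (hF t ht)]
  refine ⟨hlam, antitoneOn_of_deriv_nonpos (convex_Icc a b) hφc hφd fun t ht => ?_⟩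
  rw [interior_Icc] at ht
  nlinarith [hflux t ht, hg t ht, mul_nonneg hlam.le (hF t ht)]

theorem integral_mul_le_mul_integral_of_antitoneOn {g φ : ℝ → ℝ} {a t : ℝ} (hat : a ≤ t)
    (hg : ContinuousOn g (Icc a t)) (hgnn : ∀ s ∈ Icc a t, 0 ≤ g s)
    (hφc : ContinuousOn φ (Icc a t)) (hφ : AntitoneOn φ (Icc a t)) :
    ∫ s in a..t, g s * φ s ≤ φ a * ∫ s in a..t, g s := by
  rw [← integral_const_mul]
  refine integral_mono_on hat ((hg.mul hφc).intervalIntegrable_of_Icc hat)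
    ((hg.intervalIntegrable_of_Icc hat).const_mul _) fun s hs => ?_
  rw [mul_comm]
  exact mul_le_mul_of_nonneg_right (hφ (left_mem_Icc.2 hat) hs hs.1) (hgnn s hs)

theorem one_div_integral_le_of_mul_deriv_eq_neg_integral {g φ : ℝ → ℝ} {r lam : ℝ} (hr : 0 ≤ r)
    (hgc : ContinuousOn g (Icc 0 r)) (hgnn : ∀ t ∈ Icc 0 r, 0 ≤ g t)
    (hgpos : ∀ t ∈ Ioo 0 r, 0 < g t) (hφc : ContinuousOn φ (Icc 0 r))
    (hφd : DifferentiableOn ℝ φ (Ioo 0 r)) (hφnn : ∀ t ∈ Icc 0 r, 0 ≤ φ t) (hφ0 : 0 < φ 0)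
    (hφr : φ r = 0) (hflux : ∀ t ∈ Ioo 0 r, g t * deriv φ t = -(lam * ∫ s in 0..t, g s * φ s)) :
    1 / (∫ σ in 0..r, 1 / g σ * ∫ s in 0..σ, g s) ≤ lam := by
  have hsub : ∀ t ∈ Ioo 0 r, Icc 0 t ⊆ Icc 0 r := fun t ht => Icc_subset_Icc_right ht.2.le
  have hF : ∀ t ∈ Ioo 0 r, 0 ≤ ∫ s in 0..t, g s * φ s := fun t ht =>
    integral_nonneg ht.1.le fun s hs => mul_nonneg (hgnn s (hsub t ht hs)) (hφnn s (hsub t ht hs))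
  obtain ⟨hlam, hanti⟩ :=
    pos_and_antitoneOn_of_mul_deriv_eq_neg hr hφc hφd (hφr ▸ hφ0) hgpos hF hflux
  -- otherwise the integral is junk `0` and the bound reads `1 / 0 = 0 ≤ λ`
  by_cases hI : IntervalIntegrable (fun σ => 1 / g σ * ∫ s in 0..σ, g s) MeasureTheory.volume 0 r
  swap
  · rw [integral_undef hI, div_zero]
    exact hlam.le
  have hbound : ∀ t ∈ Ioo 0 r, -deriv φ t ≤ lam * φ 0 * (1 / g t * ∫ s in 0..t, g s) := by
    intro t ht
    have hgt := hgpos t ht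
    calc -deriv φ t = lam * (∫ s in 0..t, g s * φ s) / g t := by
          field_simp; linarith [hflux t ht]
      _ ≤ lam * (φ 0 * ∫ s in 0..t, g s) / g t := by
          gcongr
          exact integral_mul_le_mul_integral_of_antitoneOn ht.1.le (hgc.mono (hsub t ht))
            (fun s hs => hgnn s (hsub t ht hs)) (hφc.mono (hsub t ht)) (hanti.mono (hsub t ht))
      _ = lam * φ 0 * (1 / g t * ∫ s in 0..t, g s) := by ring
  have hφ0_le := sub_le_integral_of_hasDeriv_right_of_le hr hφc.neg
    (fun t ht =>
      ((hφd t ht).differentiableAt (Ioo_mem_nhds ht.1 ht.2)).hasDerivAt.neg.hasDerivWithinAt)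
    ((intervalIntegrable_iff_integrableOn_Icc_of_le hr).1 (hI.const_mul (lam * φ 0))) hbound
  rw [integral_const_mul, Pi.neg_apply, Pi.neg_apply, hφr] at hφ0_le
  set I := ∫ σ in 0..r, 1 / g σ * ∫ s in 0..σ, g s
  have h1 : 1 ≤ lam * I := le_of_mul_le_mul_left (by linarith) hφ0
  rw [div_le_iff₀ (pos_of_mul_pos_right (one_pos.trans_le h1) hlam.le)]
  exact h1

theorem stmt8_general (n : ℕ) (hn : 2 ≤ n) (r : ℝ) (hr : 0 < r)
    (f : ℝ → ℝ) (hf : ContDiffOn ℝ 2 f (Set.Icc 0 r))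
    (hf0 : f 0 = 0)
    (hfpos : ∀ t ∈ Set.Ioc (0:ℝ) r, 0 < f t)
    (lam : ℝ) (φ : ℝ → ℝ) (hφ : ContDiffOn ℝ 2 φ (Set.Icc 0 r))
    (hφpos : ∀ t ∈ Set.Ico (0:ℝ) r, 0 < φ t) (hφr : φ r = 0)
    (hφode : ∀ t ∈ Set.Ioo (0:ℝ) r,
      deriv (deriv φ) t + ((n : ℝ) - 1) * (deriv f t / f t) * deriv φ t + lam * φ t = 0) :
    lam ≥ 1 / (∫ σ in (0:ℝ)..r, (1 / f σ ^ (n - 1)) * ∫ s in (0:ℝ)..σ, f s ^ (n - 1)) := by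
  have hIcc : ∀ t ∈ Ioo 0 r, Icc 0 r ∈ nhds t := fun t ht => Icc_mem_nhds ht.1 ht.2
  have hfnn : ∀ t ∈ Icc 0 r, 0 ≤ f t := fun t ht =>
    ht.1.eq_or_lt.elim (fun h => h ▸ hf0.ge) fun h => (hfpos t ⟨h, ht.2⟩).le
  have hφnn : ∀ t ∈ Icc 0 r, 0 ≤ φ t := fun t ht =>
    ht.2.eq_or_lt.elim (fun h => h ▸ hφr.ge) fun h => (hφpos t ⟨ht.1, h⟩).le
  have hflux : ∀ t ∈ Ioo 0 r,
      f t ^ (n - 1) * deriv φ t = -(lam * ∫ s in 0..t, f s ^ (n - 1) * φ s) := by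
    refine fun t ht => mul_deriv_eq_neg_integral (g := fun s => f s ^ (n - 1))
      (hf.continuousOn.pow _) (by rw [hf0, zero_pow (by omega)]) (hφ.of_le one_le_two)
      (fun s hs => ?_) ht
    refine hasDerivAt_pow_mul_deriv_of_ode
      ((hf.contDiffAt (hIcc s hs)).differentiableAt two_ne_zero)
      (((hφ.contDiffAt (hIcc s hs)).derivWithin (m := 1) le_rfl).differentiableAt one_ne_zero)
      (hfpos s ⟨hs.1, hs.2.le⟩).ne' ?_
    rw [Nat.cast_pred (by omega)]
    exact hφode s hs
  exact one_div_integral_le_of_mul_deriv_eq_neg_integral (g := fun s => f s ^ (n - 1)) hr.le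
    (hf.continuousOn.pow _) (fun t ht => pow_nonneg (hfnn t ht) _)
    (fun t ht => pow_pos (hfpos t ⟨ht.1, ht.2.le⟩) _)
    hφ.continuousOn ((hφ.differentiableOn two_ne_zero).mono Ioo_subset_Icc_self) hφnn
    (hφpos 0 ⟨le_rfl, hr⟩) hφr hflux

/-- Barroso–Bessa lower bound: a radial first eigenvalue `λ` of the geodesic ball of
radius `r` in a spherically symmetric manifold with metric coefficient `f` satisfies
`λ ≥ 1 / ∫₀ʳ f(σ)^{-(n-1)} ∫₀^σ f(s)^{n-1} ds dσ`. -/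
theorem stmt8 (n : ℕ) (hn : 2 ≤ n) (r : ℝ) (hr : 0 < r)
    (f : ℝ → ℝ) (hf : ContDiffOn ℝ 2 f (Set.Icc 0 r))
    (hf0 : f 0 = 0) (hf'0 : derivWithin f (Set.Icc 0 r) 0 = 1)
    (hfpos : ∀ t ∈ Set.Ioc (0:ℝ) r, 0 < f t)
    (lam : ℝ) (φ : ℝ → ℝ) (hφ : ContDiffOn ℝ 2 φ (Set.Icc 0 r))
    (hφpos : ∀ t ∈ Set.Ico (0:ℝ) r, 0 < φ t) (hφr : φ r = 0)
    (hφ'0 : derivWithin φ (Set.Icc 0 r) 0 = 0)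
    (hφode : ∀ t ∈ Set.Ioo (0:ℝ) r,
      deriv (deriv φ) t + ((n : ℝ) - 1) * (deriv f t / f t) * deriv φ t + lam * φ t = 0) :
    lam ≥ 1 / (∫ σ in (0:ℝ)..r, (1 / f σ ^ (n - 1)) * ∫ s in (0:ℝ)..σ, f s ^ (n - 1)) :=
  stmt8_general n hn r hr f hf hf0 hfpos lam φ hφ hφpos hφr hφode
end
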